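/- Suppose a group G acts on a uniform space X and the action is both neutral and uniformly properly discontinuous. Then the projection p: X → X/G is a uniform covering map, i.e., it generates the uniform structure on X/G and has the unique chain lifting property (chain lifting together with uniqueness of chain lifts). -/

import Mathlib

open scoped Uniformity

/-- Symmetric relation (Mathlib's removed `SymmetricRel`, old definition). -/
def SymmetricRel {α : Type*} (V : Set (α × α)) : Prop :=
  Prod.swap ⁻¹' V = V

/-- An `E`-chain: consecutive members of the list are `E`-related. -/
def ChainIn {α : Type*} (E : Set (α × α)) (c : List α) : Prop :=
  c.Chain' fun a b => (a, b) ∈ E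

/-- The image `f(E)` of a relation under a map. -/
def imgRel {α β : Type*} (f : α → β) (E : Set (α × α)) : Set (β × β) :=
  Prod.map f f '' E

/-- The orbit projection `p : X → X/G`. -/
def proj (G X : Type*) [Group G] [MulAction G X] :
    X → Quotient (MulAction.orbitRel G X) :=
  Quotient.mk (MulAction.orbitRel G X)

/-- `G_F`: the subgroup of `G` generated by `S_F = {h | (x, h • x) ∈ F for some x}`. -/
def GF (G : Type*) {X : Type*} [Group G] [MulAction G X] (F : Set (X × X)) : Subgroup G :=
  Subgroup.closure {h : G | ∃ x : X, (x, h • x) ∈ F}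

/-- Chain lifting property for `f : X → Y`: for every (symmetric) entourage `E` of `X`
there is an entourage `F` such that every `f(F)`-chain starting at `f x₀` lifts to an
`E`-chain starting at `x₀`. -/
def HasChainLifting {X Y : Type*} [UniformSpace X] (f : X → Y) : Prop :=
  ∀ E ∈ 𝓤 X, SymmetricRel E → ∃ F ∈ 𝓤 X, SymmetricRel F ∧
    ∀ (x₀ : X) (d : List Y), ChainIn (imgRel f F) d → d.head? = some (f x₀) →
      ∃ c : List X, ChainIn E c ∧ c.head? = some x₀ ∧ c.map f = d

/-- Uniqueness of chain lifts: there is an entourage `F` such that two `F`-chains with the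
same origin and the same image are equal. -/
def HasUniqueChainLifts {X Y : Type*} [UniformSpace X] (f : X → Y) : Prop :=
  ∃ F ∈ 𝓤 X, SymmetricRel F ∧
    ∀ α β : List X, ChainIn F α → ChainIn F β →
      α.head? = β.head? → α.map f = β.map f → α = β

/-- Approximate uniqueness of chain lifts: for every entourage `E` there is an entourage `F`
such that two `F`-chains with the same origin and the same image are `E`-close. -/
def HasApproxUniqueChainLifts {X Y : Type*} [UniformSpace X] (f : X → Y) : Prop :=
  ∀ E ∈ 𝓤 X, SymmetricRel E → ∃ F ∈ 𝓤 X, SymmetricRel F ∧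
    ∀ α β : List X, ChainIn F α → ChainIn F β →
      α.head? = β.head? → α.map f = β.map f →
        List.Forall₂ (fun a b => (a, b) ∈ E) α β

/-- Neutral action. -/
def Neutral (G X : Type*) [Group G] [MulAction G X] [UniformSpace X] : Prop :=
  ∀ E ∈ 𝓤 X, SymmetricRel E → ∃ F ∈ 𝓤 X, SymmetricRel F ∧
    ∀ (x y : X) (h : G), (x, h • y) ∈ F → ∃ g : G, (g • x, y) ∈ E

/-- Uniformly properly discontinuous action. -/
def UnifProperlyDiscontinuous (G X : Type*) [Group G] [MulAction G X] [UniformSpace X] : Prop :=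
  ∃ E ∈ 𝓤 X, SymmetricRel E ∧ ∀ (x : X) (g : G), (x, g • x) ∈ E → g = 1

/-- Equicontinuous action. -/
def EquicontinuousAction (G X : Type*) [Group G] [MulAction G X] [UniformSpace X] : Prop :=
  ∀ E ∈ 𝓤 X, ∃ F ∈ 𝓤 X, ∀ (g : G) (x y : X), (x, y) ∈ F → (g • x, g • y) ∈ E

/-- Small scale uniformly continuous action. -/
def SSUnifCont (G X : Type*) [Group G] [MulAction G X] [UniformSpace X] : Prop :=
  ∀ E ∈ 𝓤 X, SymmetricRel E → ∃ F ∈ 𝓤 X, SymmetricRel F ∧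
    ∀ g ∈ GF G F, {q : X × X | (g • q.1, g • q.2) ∈ E} ∈ 𝓤 X

/-- Small scale uniformly equicontinuous action. -/
def SSUnifEquicont (G X : Type*) [Group G] [MulAction G X] [UniformSpace X] : Prop :=
  ∀ E ∈ 𝓤 X, SymmetricRel E → ∃ F ∈ 𝓤 X, SymmetricRel F ∧
    ∀ g ∈ GF G F, ∀ x y : X, (x, y) ∈ F → (g • x, g • y) ∈ E

/-- Small scale bounded orbits: the orbits of `G_F` are `E`-bounded. -/
def SSBoundedOrbits (G X : Type*) [Group G] [MulAction G X] [UniformSpace X] : Prop :=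
  ∀ E ∈ 𝓤 X, SymmetricRel E → ∃ F ∈ 𝓤 X, SymmetricRel F ∧
    ∀ x : X, ∀ g ∈ GF G F, ∀ g' ∈ GF G F, (g • x, g' • x) ∈ E

/-- Chain connected uniform space. -/
def ChainConnectedU (X : Type*) [UniformSpace X] : Prop :=
  ∀ E ∈ 𝓤 X, SymmetricRel E → ∀ x y : X,
    ∃ c : List X, ChainIn E c ∧ c.head? = some x ∧ c.getLast? = some y

/-!
A chain in `X/G` lifts one step at a time: if `p x` is `p(F)`-close to `q`, some representative
`b` of `q` is `F`-close to a translate `h • x`, and neutrality moves `b` within its orbit to a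
point `E`-close to `x`. Lifts are unique because two lifts `b` and `b' = g • b` of the same point
that are `F`-close to a common predecessor are `F ○ F`-close, so `g = 1` once `F ○ F` lies in
the entourage witnessing uniform proper discontinuity.
-/

theorem SymmetricRel.mk_mem_comm {α : Type*} {V : Set (α × α)} (hV : SymmetricRel V)
    {x y : α} : (x, y) ∈ V ↔ (y, x) ∈ V :=
  Set.ext_iff.1 hV (y, x)

theorem SetRel.IsSymm.symmetricRel {α : Type*} {V : SetRel α α} (hV : V.IsSymm) :
    SymmetricRel V :=
  Set.ext fun _ => SetRel.comm V

namespace List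

variable {α β : Type*} {R : α → α → Prop} {S : β → β → Prop} {f : α → β}

theorem exists_isChain_cons_map_eq_of_forall_lift
    (hlift : ∀ a b, S (f a) b → ∃ a', R a a' ∧ f a' = b) :
    ∀ (d : List β) (a : α), (f a :: d).IsChain S →
      ∃ c : List α, (a :: c).IsChain R ∧ c.map f = d
  | [], _, _ => ⟨[], isChain_singleton _, rfl⟩
  | b :: d, a, hd => by
    obtain ⟨hab, hd⟩ := isChain_cons_cons.1 hd
    obtain ⟨a', haa', rfl⟩ := hlift a b hab
    obtain ⟨c, hc, rfl⟩ := exists_isChain_cons_map_eq_of_forall_lift hlift d a' hd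
    exact ⟨a' :: c, hc.cons_cons haa', rfl⟩

theorem eq_of_isChain_cons_of_map_eq (hR : ∀ a b b', R a b → R a b' → f b = f b' → b = b') :
    ∀ {a : α} {l l' : List α}, (a :: l).IsChain R → (a :: l').IsChain R → l.map f = l'.map f →
      l = l'
  | _, [], _, _, _, h => (map_eq_nil_iff.1 h.symm).symm
  | _, _ :: _, [], _, _, h => nomatch h
  | a, b :: l, b' :: l', hchain, hchain', hmap => by
    obtain ⟨hab, hl⟩ := isChain_cons_cons.1 hchain
    obtain ⟨hab', hl'⟩ := isChain_cons_cons.1 hchain'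
    obtain ⟨hfb, htail⟩ := cons_eq_cons.1 hmap
    obtain rfl := hR a b b' hab hab' hfb
    rw [eq_of_isChain_cons_of_map_eq hR hl hl' htail]

theorem eq_of_isChain_of_head?_eq_of_map_eq
    (hR : ∀ a b b', R a b → R a b' → f b = f b' → b = b') {l l' : List α} (hl : l.IsChain R)
    (hl' : l'.IsChain R) (hhead : l.head? = l'.head?) (h : l.map f = l'.map f) : l = l' := by
  match l, l', hhead with
  | [], [], _ => rfl
  | _ :: l, _ :: l', rfl => rw [eq_of_isChain_cons_of_map_eq hR hl hl' (cons_eq_cons.1 h).2]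

end List

section Orbit

variable {G X : Type*} [Group G] [MulAction G X]

theorem proj_eq_proj_iff {a b : X} : proj G X a = proj G X b ↔ ∃ g : G, g • b = a :=
  Quotient.eq.trans (MulAction.orbitRel_apply.trans MulAction.mem_orbit_iff)

theorem proj_smul (g : G) (b : X) : proj G X (g • b) = proj G X b :=
  proj_eq_proj_iff.2 ⟨g, rfl⟩

theorem exists_mem_proj_eq_of_mem_imgRel {E F : Set (X × X)} (hE : SymmetricRel E)
    (hF : SymmetricRel F) (hEF : ∀ (x y : X) (h : G), (x, h • y) ∈ F → ∃ g : G, (g • x, y) ∈ E)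
    {x : X} {q : Quotient (MulAction.orbitRel G X)}
    (hq : (proj G X x, q) ∈ imgRel (proj G X) F) :
    ∃ x', (x, x') ∈ E ∧ proj G X x' = q := by
  obtain ⟨⟨a, b⟩, hab, hpq⟩ := hq
  obtain ⟨hpa, rfl⟩ := Prod.mk.inj hpq
  obtain ⟨h, rfl⟩ := proj_eq_proj_iff.1 hpa
  obtain ⟨g, hg⟩ := hEF b x h (hF.mk_mem_comm.1 hab)
  exact ⟨g • b, hE.mk_mem_comm.1 hg, proj_smul g b⟩

theorem eq_of_mem_of_mem_of_proj_eq {E₀ F : Set (X × X)} (hF : SymmetricRel F)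
    (hFE₀ : SetRel.comp F F ⊆ E₀) (hE₀ : ∀ (x : X) (g : G), (x, g • x) ∈ E₀ → g = 1)
    {a b b' : X} (hb : (a, b) ∈ F) (hb' : (a, b') ∈ F) (h : proj G X b = proj G X b') : b = b' := by
  obtain ⟨g, rfl⟩ := proj_eq_proj_iff.1 h
  rw [hE₀ b' g (hFE₀ ⟨a, hF.mk_mem_comm.1 hb', hb⟩), one_smul]

variable [UniformSpace X]

theorem hasChainLifting_proj_of_neutral (hneutral : Neutral G X) :
    HasChainLifting (proj G X) := by
  intro E hE hEsymm
  obtain ⟨F, hF, hFsymm, hEF⟩ := hneutral E hE hEsymm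
  refine ⟨F, hF, hFsymm, fun x₀ d hd hhead => ?_⟩
  obtain ⟨d, rfl⟩ := List.head?_eq_some_iff.1 hhead
  obtain ⟨c, hc, hcd⟩ := List.exists_isChain_cons_map_eq_of_forall_lift
    (fun _ _ => exists_mem_proj_eq_of_mem_imgRel hEsymm hFsymm hEF) d x₀ hd
  exact ⟨x₀ :: c, hc, rfl, by rw [List.map_cons, hcd]⟩

theorem hasUniqueChainLifts_proj_of_unifProperlyDiscontinuous
    (hupd : UnifProperlyDiscontinuous G X) : HasUniqueChainLifts (proj G X) := by
  obtain ⟨E₀, hE₀, -, hfree⟩ := hupd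
  obtain ⟨F, hF, hFsymm, hFE₀⟩ := comp_symm_mem_uniformity_sets hE₀
  exact ⟨F, hF, hFsymm.symmetricRel, fun α β hα hβ =>
    List.eq_of_isChain_of_head?_eq_of_map_eq
      (fun _ _ _ => eq_of_mem_of_mem_of_proj_eq hFsymm.symmetricRel hFE₀ hfree) hα hβ⟩

end Orbit

/-- A neutral and uniformly properly discontinuous action induces a uniform covering map:
the projection generates the uniform structure on `X/G` (by definition of the quotient
structure) and has the unique chain lifting property. -/
theorem stmt3 (G X : Type*) [Group G] [MulAction G X] [UniformSpace X]
    (hneutral : Neutral G X) (hupd : UnifProperlyDiscontinuous G X) :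
    HasChainLifting (proj G X) ∧ HasUniqueChainLifts (proj G X) :=
  ⟨hasChainLifting_proj_of_neutral hneutral,
    hasUniqueChainLifts_proj_of_unifProperlyDiscontinuous hupd⟩
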